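/- arXiv:2601.20853 — 2 statements merged into one kernel-verified Lean document; each statement's English description precedes it below -/
import Mathlib

section
/- Argmax consistency (van der Vaart Theorem 5.7 specialization): let Q_n : Θ → ℝ be random functions and Q : Θ → ℝ deterministic on a compact metric space Θ, with sup_{θ∈Θ}|Q_n(θ) − Q(θ)| →_p 0 and for every ε > 0, inf{Q(θ) : d(θ, θ₀) ≥ ε} > Q(θ₀). If θ̂_n ∈ Θ satisfies Q_n(θ̂_n) ≤ inf_{θ∈Θ} Q_n(θ) + o_p(1), then d(θ̂_n, θ₀) →_p 0. -/
open MeasureTheory Filter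

/-! A near-minimizer of `Qₙ` is a `3δ`-near-minimizer of `Q` as soon as `Qₙ` is uniformly
`δ`-close to `Q` and the slack is below `δ`. When `θ̂ₙ` is `ε`-far from `θ₀`, the well-separation
gap `c` forces one of these two events to fail with `δ = c / 3`, and both failures have vanishing
probability. -/

theorem lt_add_three_mul_of_uniform_close {Θ : Type*} {f g : Θ → ℝ} {x y : Θ} {r δ : ℝ}
    (hfg : ∀ θ, |f θ - g θ| < δ) (hr : r < δ) (hx : f x ≤ f y + r) :
    g x < g y + 3 * δ := by
  have hx' := abs_lt.mp (hfg x)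
  have hy' := abs_lt.mp (hfg y)
  linarith [hx'.1, hy'.2]

theorem tendsto_measure_zero_of_subset_union {α ι : Type*} [MeasurableSpace α] (μ : Measure α)
    {l : Filter ι} {s t u : ι → Set α} (hs : ∀ i, s i ⊆ t i ∪ u i)
    (ht : Tendsto (fun i => μ (t i)) l (nhds 0)) (hu : Tendsto (fun i => μ (u i)) l (nhds 0)) :
    Tendsto (fun i => μ (s i)) l (nhds 0) := by
  refine tendsto_of_tendsto_of_tendsto_of_le_of_le tendsto_const_nhds (by simpa using ht.add hu)
    (fun _ => zero_le) fun i => ?_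
  exact (measure_mono (hs i)).trans (measure_union_le _ _)

theorem argmin_consistency_general
    {Θ : Type*} [MetricSpace Θ]
    {Ω : Type*} [MeasurableSpace Ω] (μ : Measure Ω)
    (Qn : ℕ → Ω → Θ → ℝ) (Q : Θ → ℝ) (θ₀ : Θ)
    -- uniform convergence in probability
    (hunif : ∀ ε > (0 : ℝ),
      Tendsto (fun n => μ {ω | ∃ θ, ε ≤ |Qn n ω θ - Q θ|}) atTop (nhds 0))
    -- well-separated minimum
    (hsep : ∀ ε > (0 : ℝ), ∃ c > (0 : ℝ), ∀ θ, ε ≤ dist θ θ₀ → Q θ₀ + c ≤ Q θ)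
    -- near-minimizers: Q_n(θ̂_n) ≤ inf_θ Q_n(θ) + o_p(1)
    (that : ℕ → Ω → Θ)
    (R : ℕ → Ω → ℝ)
    (hR : ∀ ε > (0 : ℝ), Tendsto (fun n => μ {ω | ε ≤ |R n ω|}) atTop (nhds 0))
    (hnear : ∀ n ω θ, Qn n ω (that n ω) ≤ Qn n ω θ + R n ω) :
    ∀ ε > (0 : ℝ),
      Tendsto (fun n => μ {ω | ε ≤ dist (that n ω) θ₀}) atTop (nhds 0) := by
  intro ε hε
  obtain ⟨c, hc, hgap⟩ := hsep ε hε
  refine tendsto_measure_zero_of_subset_union μ (fun n ω hfar => ?_)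
    (hunif (c / 3) (by positivity)) (hR (c / 3) (by positivity))
  by_contra! hgood
  simp only [Set.mem_union, Set.mem_ofPred_eq, not_or, not_exists, not_le] at hgood
  have hclose := lt_add_three_mul_of_uniform_close hgood.1 (abs_lt.mp hgood.2).2 (hnear n ω θ₀)
  linarith [hgap _ hfar]

/-- Argmax (here: argmin) consistency, van der Vaart Theorem 5.7
specialization: uniform convergence in probability of `Q_n` to `Q` plus a
well-separated minimum of `Q` at `θ₀` imply that near-minimizers `θ̂_n` of `Q_n`
converge in probability to `θ₀`. -/
theorem argmin_consistency
    {Θ : Type*} [MetricSpace Θ] [CompactSpace Θ]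
    {Ω : Type*} [MeasurableSpace Ω] (μ : Measure Ω) [IsProbabilityMeasure μ]
    (Qn : ℕ → Ω → Θ → ℝ) (Q : Θ → ℝ) (θ₀ : Θ)
    -- uniform convergence in probability
    (hunif : ∀ ε > (0 : ℝ),
      Tendsto (fun n => μ {ω | ∃ θ, ε ≤ |Qn n ω θ - Q θ|}) atTop (nhds 0))
    -- well-separated minimum
    (hsep : ∀ ε > (0 : ℝ), ∃ c > (0 : ℝ), ∀ θ, ε ≤ dist θ θ₀ → Q θ₀ + c ≤ Q θ)
    -- near-minimizers: Q_n(θ̂_n) ≤ inf_θ Q_n(θ) + o_p(1)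
    (that : ℕ → Ω → Θ)
    (R : ℕ → Ω → ℝ)
    (hR : ∀ ε > (0 : ℝ), Tendsto (fun n => μ {ω | ε ≤ |R n ω|}) atTop (nhds 0))
    (hnear : ∀ n ω θ, Qn n ω (that n ω) ≤ Qn n ω θ + R n ω) :
    ∀ ε > (0 : ℝ),
      Tendsto (fun n => μ {ω | ε ≤ dist (that n ω) θ₀}) atTop (nhds 0) :=
  argmin_consistency_general μ Qn Q θ₀ hunif hsep that R hR hnear
end

section
/- Efficiency of the optimal GMM weighting: for any k×p matrix G of full column rank and symmetric positive definite matrices W, Σ (k×k), the matrix (G^⊤ W G)^{-1} G^⊤ W Σ W G (G^⊤ W G)^{-1} − (G^⊤ Σ^{-1} G)^{-1} is positive semidefinite. -/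
/-!
Both matrices are of the form `L Σ Lᴴ` for a left inverse `L` of `G`: the GMM one for
`L = (GᴴWG)⁻¹GᴴW`, the efficient one for the GLS left inverse `L₀ = (GᴴΣ⁻¹G)⁻¹GᴴΣ⁻¹`.
Since `Σ L₀ᴴ = G (GᴴΣ⁻¹G)⁻¹`, every left inverse `M` satisfies `M Σ L₀ᴴ = (GᴴΣ⁻¹G)⁻¹`, so the
cross terms collapse and `L Σ Lᴴ - (GᴴΣ⁻¹G)⁻¹ = (L - L₀) Σ (L - L₀)ᴴ`, which is positive
semidefinite (the Gauss–Markov argument).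
-/

open Matrix

namespace Matrix

variable {K : Type*} [Field K] {m n : Type*} [Fintype n]

theorem mulVec_injective_of_rank_eq_card {A : Matrix m n K} (hA : A.rank = Fintype.card n) :
    Function.Injective A.mulVec := by
  have h := LinearMap.finrank_range_add_finrank_ker A.mulVecLin
  rw [← rank, hA, Module.finrank_fintype_fun_eq_card, Nat.add_eq_left,
    Submodule.finrank_eq_zero] at h
  exact LinearMap.ker_eq_bot.mp h

variable [Fintype m] [DecidableEq n]

theorem mulVec_injective_of_mul_eq_one {L : Matrix n m K} {G : Matrix m n K} (hL : L * G = 1) :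
    Function.Injective G.mulVec := fun v w h => by
  simpa only [mulVec_mulVec, hL, one_mulVec] using congrArg (L *ᵥ ·) h

variable [StarRing K]

theorem nonsing_inv_mul_conjTranspose_mul_mul_eq_one {G : Matrix m n K} {W : Matrix m m K}
    (h : IsUnit (Gᴴ * W * G).det) : (Gᴴ * W * G)⁻¹ * Gᴴ * W * G = 1 := by
  rw [Matrix.mul_assoc _ W, Matrix.mul_assoc, ← Matrix.mul_assoc Gᴴ, nonsing_inv_mul _ h]

theorem nonsing_inv_mul_conjTranspose_mul_mul_conjTranspose {G : Matrix m n K}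
    {W : Matrix m m K} (hW : W.IsHermitian) (S : Matrix m m K) :
    (Gᴴ * W * G)⁻¹ * Gᴴ * W * S * ((Gᴴ * W * G)⁻¹ * Gᴴ * W)ᴴ
      = (Gᴴ * W * G)⁻¹ * (Gᴴ * W * S * W * G) * (Gᴴ * W * G)⁻¹ := by
  have hA : (Gᴴ * W * G)⁻¹ᴴ = (Gᴴ * W * G)⁻¹ :=
    (isHermitian_conjTranspose_mul_mul G hW).inv.eq
  rw [conjTranspose_mul, conjTranspose_mul, hA, hW.eq, conjTranspose_conjTranspose]
  simp only [Matrix.mul_assoc]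

variable [DecidableEq m] [PartialOrder K]

theorem PosDef.posSemidef_mul_mul_conjTranspose_sub_inv {S : Matrix m m K} (hS : S.PosDef)
    {L : Matrix n m K} {G : Matrix m n K} (hL : L * G = 1) :
    (L * S * Lᴴ - (Gᴴ * S⁻¹ * G)⁻¹).PosSemidef := by
  set B := Gᴴ * S⁻¹ * G
  have hB : B.PosDef := hS.inv.conjTranspose_mul_mul_same (mulVec_injective_of_mul_eq_one hL)
  set L₀ := B⁻¹ * Gᴴ * S⁻¹
  have hBinv : B⁻¹ᴴ = B⁻¹ := hB.isHermitian.inv.eq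
  have hSL₀ : S * L₀ᴴ = G * B⁻¹ := by
    rw [conjTranspose_mul, conjTranspose_mul, hS.isHermitian.inv.eq, hBinv,
      conjTranspose_conjTranspose, ← Matrix.mul_assoc, ← Matrix.mul_assoc,
      mul_nonsing_inv _ ((isUnit_iff_isUnit_det S).mp hS.isUnit), Matrix.one_mul]
  have hLeftInv : ∀ M : Matrix n m K, M * G = 1 → M * S * L₀ᴴ = B⁻¹ := fun M hM => by
    rw [Matrix.mul_assoc, hSL₀, ← Matrix.mul_assoc, hM, Matrix.one_mul]
  have hL₀ : L₀ * G = 1 := nonsing_inv_mul_conjTranspose_mul_mul_eq_one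
    ((isUnit_iff_isUnit_det B).mp hB.isUnit)
  have hL₀SL : L₀ * S * Lᴴ = B⁻¹ := by
    rw [← hBinv, ← hLeftInv L hL, conjTranspose_mul (L * S), conjTranspose_mul L S,
      conjTranspose_conjTranspose, hS.isHermitian.eq, Matrix.mul_assoc]
  have hSquare : (L - L₀) * S * (L - L₀)ᴴ = L * S * Lᴴ - B⁻¹ := by
    simp only [conjTranspose_sub, Matrix.sub_mul, Matrix.mul_sub, hLeftInv L hL,
      hLeftInv L₀ hL₀, hL₀SL]
    abel
  rw [← hSquare]
  exact hS.posSemidef.mul_mul_conjTranspose_same _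

end Matrix

theorem optimal_weighting_efficiency_general
    {k p : ℕ}
    (G : Matrix (Fin k) (Fin p) ℝ) (hG : G.rank = p)
    (W : Matrix (Fin k) (Fin k) ℝ) (hWpd : W.PosDef)
    (Sig : Matrix (Fin k) (Fin k) ℝ) (hSpd : Sig.PosDef) :
    ((Gᵀ * W * G)⁻¹ * (Gᵀ * W * Sig * W * G) * (Gᵀ * W * G)⁻¹
      - (Gᵀ * Sig⁻¹ * G)⁻¹).PosSemidef := by
  have hGinj : Function.Injective G.mulVec :=
    mulVec_injective_of_rank_eq_card (hG.trans (Fintype.card_fin p).symm)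
  have hA : IsUnit (Gᴴ * W * G).det :=
    (isUnit_iff_isUnit_det _).mp (hWpd.conjTranspose_mul_mul_same hGinj).isUnit
  rw [← conjTranspose_eq_transpose_of_trivial G,
    ← nonsing_inv_mul_conjTranspose_mul_mul_conjTranspose hWpd.isHermitian Sig]
  exact hSpd.posSemidef_mul_mul_conjTranspose_sub_inv
    (nonsing_inv_mul_conjTranspose_mul_mul_eq_one hA)

/-- Efficiency of the optimal GMM weighting: for any full-column-rank `G`
and symmetric positive definite `W`, `Sig`, the difference
`(GᵀWG)⁻¹ GᵀWΣWG (GᵀWG)⁻¹ − (GᵀΣ⁻¹G)⁻¹` is positive semidefinite. -/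
theorem optimal_weighting_efficiency
    {k p : ℕ} (hpk : p ≤ k)
    (G : Matrix (Fin k) (Fin p) ℝ) (hG : G.rank = p)
    (W : Matrix (Fin k) (Fin k) ℝ) (hWsymm : W.IsSymm) (hWpd : W.PosDef)
    (Sig : Matrix (Fin k) (Fin k) ℝ) (hSsymm : Sig.IsSymm) (hSpd : Sig.PosDef) :
    ((Gᵀ * W * G)⁻¹ * (Gᵀ * W * Sig * W * G) * (Gᵀ * W * G)⁻¹
      - (Gᵀ * Sig⁻¹ * G)⁻¹).PosSemidef :=
  optimal_weighting_efficiency_general G hG W hWpd Sig hSpd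
end
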